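/- In a type-theoretic fibration category, every acyclic cofibration is a homotopy equivalence. -/

import Mathlib

open CategoryTheory CategoryTheory.Limits

universe v u

variable {C : Type u} [Category.{v} C]

/-- An acyclic cofibration: a morphism with the left lifting property against
all fibrations. -/
def AcyclicCofib (Fib : MorphismProperty C) {A B : C} (i : A ⟶ B) : Prop :=
  ∀ {X Y : C} (p : X ⟶ Y), Fib p → HasLiftingProperty i p

/-- `f` and `g` are homotopic: there is a path object `Y → P → Y × Y`
(acyclic cofibration followed by fibration factoring the diagonal) and a
homotopy `H : X ⟶ P` whose two projections are `f` and `g`. -/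
def Homotopic [HasBinaryProducts C] (Fib : MorphismProperty C)
    {X Y : C} (f g : X ⟶ Y) : Prop :=
  ∃ (P : C) (s : Y ⟶ P) (p : P ⟶ Y ⨯ Y),
    AcyclicCofib Fib s ∧ Fib p ∧ s ≫ p = diag Y ∧
    ∃ H : X ⟶ P, H ≫ p ≫ prod.fst = f ∧ H ≫ p ≫ prod.snd = g

theorem AcyclicCofib.exists_retraction [HasTerminal C] {Fib : MorphismProperty C}
    {A B : C} {i : A ⟶ B} (hi : AcyclicCofib Fib i) (hA : Fib (terminal.from A)) :
    ∃ r : B ⟶ A, i ≫ r = 𝟙 A :=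
  have := hi (terminal.from A) hA
  have sq : CommSq (𝟙 A) i (terminal.from A) (terminal.from B) := ⟨Subsingleton.elim _ _⟩
  ⟨sq.lift, sq.fac_left⟩

section Homotopy

variable [HasBinaryProducts C] {Fib : MorphismProperty C} {Y : C}
  (hY : ∃ (P : C) (s : Y ⟶ P) (p : P ⟶ Y ⨯ Y),
    AcyclicCofib Fib s ∧ Fib p ∧ s ≫ p = diag Y)
include hY

theorem Homotopic.refl {X : C} (f : X ⟶ Y) : Homotopic Fib f f := by
  obtain ⟨P, s, p, hs, hp, hsp⟩ := hY
  refine ⟨P, s, p, hs, hp, hsp, f ≫ s, ?_, ?_⟩ <;>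
    rw [Category.assoc, reassoc_of% hsp, ← Category.assoc, Limits.prod.comp_diag]
  exacts [prod.lift_fst f f, prod.lift_snd f f]

theorem Homotopic.of_acyclicCofib_comp_eq {A B : C} {i : A ⟶ B} (hi : AcyclicCofib Fib i)
    {f g : B ⟶ Y} (hfg : i ≫ f = i ≫ g) : Homotopic Fib f g := by
  obtain ⟨P, s, p, hs, hp, hsp⟩ := hY
  have := hi p hp
  have sq : CommSq (i ≫ f ≫ s) i p (prod.lift f g) :=
    ⟨by simp only [Category.assoc, hsp, prod.comp_lift, Category.comp_id, hfg]⟩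
  exact ⟨P, s, p, hs, hp, hsp, sq.lift, by rw [reassoc_of% sq.fac_right, prod.lift_fst],
    by rw [reassoc_of% sq.fac_right, prod.lift_snd]⟩

end Homotopy

theorem stmt13_general [HasTerminal C] [HasBinaryProducts C]
    (Fib : MorphismProperty C)
    -- fibrations contain the isomorphisms and all maps to the terminal object
    (hterm : ∀ X : C, Fib (terminal.from X))
    -- every morphism factors as an acyclic cofibration followed by a fibration
    (hfact : ∀ {X Y : C} (f : X ⟶ Y),
      ∃ (W : C) (i : X ⟶ W) (p : W ⟶ Y), AcyclicCofib Fib i ∧ Fib p ∧ i ≫ p = f)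
    {A B : C} (i : A ⟶ B) (hi : AcyclicCofib Fib i) :
    ∃ r : B ⟶ A, Homotopic Fib (i ≫ r) (𝟙 A) ∧ Homotopic Fib (r ≫ i) (𝟙 B) := by
  obtain ⟨r, hr⟩ := hi.exists_retraction (hterm A)
  have hir : i ≫ r ≫ i = i ≫ 𝟙 B := by rw [reassoc_of% hr, Category.comp_id]
  exact ⟨r, hr ▸ Homotopic.refl (hfact (diag A)) _,
    Homotopic.of_acyclicCofib_comp_eq (hfact (diag B)) hi hir⟩

/-- in a type-theoretic fibration category, every acyclic
cofibration is a homotopy equivalence.  (Binary products exist in any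
type-theoretic fibration category, being pullbacks of fibrations over the
terminal object; here they are assumed as an instance to express path
objects.) -/
theorem stmt13 [HasTerminal C] [HasBinaryProducts C]
    (Fib : MorphismProperty C)
    -- fibrations contain the isomorphisms and all maps to the terminal object
    (hiso : ∀ {X Y : C} (f : X ⟶ Y) [IsIso f], Fib f)
    (hterm : ∀ X : C, Fib (terminal.from X))
    -- fibrations form a subcategory
    (hcomp : ∀ {X Y Z : C} (f : X ⟶ Y) (g : Y ⟶ Z), Fib f → Fib g → Fib (f ≫ g))
    -- pullbacks of fibrations exist and are fibrations
    (hpbex : ∀ {X Y Z : C} (f : X ⟶ Z) (g : Y ⟶ Z), Fib g → HasPullback f g)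
    (hpb : ∀ {P X Y Z : C} (fst : P ⟶ X) (snd : P ⟶ Y) (f : X ⟶ Z) (g : Y ⟶ Z),
      IsPullback fst snd f g → Fib g → Fib fst)
    -- acyclic cofibrations are stable under pullback along fibrations
    (hacpb : ∀ {P X Y Z : C} (fst : P ⟶ X) (snd : P ⟶ Y) (f : X ⟶ Z) (g : Y ⟶ Z),
      IsPullback fst snd f g → AcyclicCofib Fib f → Fib g → AcyclicCofib Fib snd)
    -- every morphism factors as an acyclic cofibration followed by a fibration
    (hfact : ∀ {X Y : C} (f : X ⟶ Y),
      ∃ (W : C) (i : X ⟶ W) (p : W ⟶ Y), AcyclicCofib Fib i ∧ Fib p ∧ i ≫ p = f)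
    {A B : C} (i : A ⟶ B) (hi : AcyclicCofib Fib i) :
    ∃ r : B ⟶ A, Homotopic Fib (i ≫ r) (𝟙 A) ∧ Homotopic Fib (r ≫ i) (𝟙 B) :=
  stmt13_general Fib hterm hfact i hi
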